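/- Let A, B, C, D, E, F be the Joubert invariants of six points p₁,…,p₆ ∈ ℂ² (representing points of ℙ¹). Then A + B + C + D + E + F = 0. -/

import Mathlib

/-!
Every term of the six invariants contains exactly one bracket `[k6]`. After ordering
all brackets by antisymmetry, the coefficient of `[k6]` in the sum is `±2` times the
Plücker relation `[ab][cd] - [ac][bd] + [ad][bc] = 0` of the other four points
(indices are shifted: `jb p i j` is `[i+1 j+1]`).
-/

/-- The 2×2 bracket `[ij]`: determinant of the matrix with rows `pᵢᵀ, pⱼᵀ`. -/
def jb (p : Fin 6 → Fin 2 → ℂ) (i j : Fin 6) : ℂ := p i 0 * p j 1 - p i 1 * p j 0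

/-- Joubert invariant `A`. -/
def joubertA (p : Fin 6 → Fin 2 → ℂ) : ℂ :=
  jb p 1 4 * jb p 0 2 * jb p 3 5 +
  jb p 4 0 * jb p 3 1 * jb p 2 5 +
  jb p 0 3 * jb p 2 4 * jb p 1 5 +
  jb p 3 2 * jb p 1 0 * jb p 4 5 +
  jb p 2 1 * jb p 4 3 * jb p 0 5

/-- Joubert invariant `B`. -/
def joubertB (p : Fin 6 → Fin 2 → ℂ) : ℂ :=
  jb p 4 2 * jb p 0 1 * jb p 3 5 +
  jb p 0 3 * jb p 1 2 * jb p 4 5 +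
  jb p 1 4 * jb p 2 3 * jb p 0 5 +
  jb p 2 0 * jb p 3 4 * jb p 1 5 +
  jb p 3 1 * jb p 4 0 * jb p 2 5

/-- Joubert invariant `C`. -/
def joubertC (p : Fin 6 → Fin 2 → ℂ) : ℂ :=
  jb p 4 2 * jb p 3 0 * jb p 1 5 +
  jb p 2 3 * jb p 1 4 * jb p 0 5 +
  jb p 3 1 * jb p 0 2 * jb p 4 5 +
  jb p 1 0 * jb p 4 3 * jb p 2 5 +
  jb p 0 4 * jb p 2 1 * jb p 3 5

/-- Joubert invariant `D`. -/
def joubertD (p : Fin 6 → Fin 2 → ℂ) : ℂ :=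
  jb p 3 4 * jb p 2 0 * jb p 1 5 +
  jb p 4 2 * jb p 1 3 * jb p 0 5 +
  jb p 3 0 * jb p 1 4 * jb p 2 5 +
  jb p 2 1 * jb p 0 4 * jb p 3 5 +
  jb p 1 0 * jb p 3 2 * jb p 4 5

/-- Joubert invariant `E`. -/
def joubertE (p : Fin 6 → Fin 2 → ℂ) : ℂ :=
  jb p 2 0 * jb p 1 3 * jb p 4 5 +
  jb p 0 1 * jb p 4 2 * jb p 3 5 +
  jb p 1 4 * jb p 3 0 * jb p 2 5 +
  jb p 4 3 * jb p 2 1 * jb p 0 5 +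
  jb p 3 2 * jb p 0 4 * jb p 1 5

/-- Joubert invariant `F`. -/
def joubertF (p : Fin 6 → Fin 2 → ℂ) : ℂ :=
  jb p 3 1 * jb p 2 4 * jb p 0 5 +
  jb p 1 2 * jb p 0 3 * jb p 4 5 +
  jb p 2 0 * jb p 4 1 * jb p 3 5 +
  jb p 0 4 * jb p 3 2 * jb p 1 5 +
  jb p 4 3 * jb p 1 0 * jb p 2 5

theorem jb_swap (p : Fin 6 → Fin 2 → ℂ) (i j : Fin 6) : jb p j i = -jb p i j := by
  unfold jb; ring

theorem jb_plucker (p : Fin 6 → Fin 2 → ℂ) (i j k l : Fin 6) :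
    jb p i j * jb p k l - jb p i k * jb p j l + jb p i l * jb p j k = 0 := by
  unfold jb; ring

/-- The Joubert invariants of six points of ℙ¹ sum to zero. -/
theorem stmt15 (p : Fin 6 → Fin 2 → ℂ) :
    joubertA p + joubertB p + joubertC p + joubertD p + joubertE p + joubertF p = 0 := by
  simp only [joubertA, joubertB, joubertC, joubertD, joubertE, joubertF]
  simp only [jb_swap p 0 1, jb_swap p 0 2, jb_swap p 0 3, jb_swap p 0 4, jb_swap p 1 2,
    jb_swap p 1 3, jb_swap p 1 4, jb_swap p 2 3, jb_swap p 2 4, jb_swap p 3 4]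
  linear_combination 2 * (jb p 4 5 * jb_plucker p 0 1 2 3 - jb p 3 5 * jb_plucker p 0 1 2 4
    + jb p 2 5 * jb_plucker p 0 1 3 4 - jb p 1 5 * jb_plucker p 0 2 3 4
    + jb p 0 5 * jb_plucker p 1 2 3 4)
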